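/- arXiv:1303.1582 — 6 statements merged into one kernel-verified Lean document; each statement's English description precedes it below -/
import Mathlib

section
/- For all real u > 0, 1 + u/2 + u^2/12 > u/(1 - e^{-u}). -/
/-!
Write `P u = 1 + u / 2 + u ^ 2 / 12`. Since `P u - u = P (-u)`, the inequality says
`P u * exp (-u) < P (-u)`, i.e. `P u < P (-u) * exp u`: the `[2/2]` Padé approximant
`P u / P (-u)` of `exp` underestimates it for `u > 0`. Bounding `exp u` below by its Taylor
polynomial `T₅` of degree 5 suffices, since
`P (-u) * T₅ u - P u = u ^ 5 * (u ^ 2 - u + 2) / 1440`.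
-/

open Real

lemma taylor_five_le_exp {u : ℝ} (hu : 0 ≤ u) :
    1 + u + u ^ 2 / 2 + u ^ 3 / 6 + u ^ 4 / 24 + u ^ 5 / 120 ≤ exp u := by
  have h := sum_le_exp_of_nonneg hu 6
  simp only [Finset.sum_range_succ, Finset.sum_range_zero, Nat.factorial] at h
  norm_num at h
  linarith

lemma one_sub_half_add_sq_div_twelve_pos (u : ℝ) : 0 < 1 - u / 2 + u ^ 2 / 12 := by
  nlinarith [sq_nonneg (u - 3)]

lemma pade_two_two_lt_exp {u : ℝ} (hu : 0 < u) :
    1 + u / 2 + u ^ 2 / 12 < (1 - u / 2 + u ^ 2 / 12) * exp u := by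
  have hgap : 0 < u ^ 5 * (u ^ 2 - u + 2) / 1440 := by
    have : 0 < u ^ 2 - u + 2 := by nlinarith [sq_nonneg (u - 1 / 2)]
    positivity
  calc 1 + u / 2 + u ^ 2 / 12
      < 1 + u / 2 + u ^ 2 / 12 + u ^ 5 * (u ^ 2 - u + 2) / 1440 := by linarith
    _ = (1 - u / 2 + u ^ 2 / 12) *
          (1 + u + u ^ 2 / 2 + u ^ 3 / 6 + u ^ 4 / 24 + u ^ 5 / 120) := by ring
    _ ≤ (1 - u / 2 + u ^ 2 / 12) * exp u :=
        mul_le_mul_of_nonneg_left (taylor_five_le_exp hu.le)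
          (one_sub_half_add_sq_div_twelve_pos u).le

theorem stmt_1 : ∀ u : ℝ, 0 < u →
    1 + u / 2 + u ^ 2 / 12 > u / (1 - Real.exp (-u)) := by
  intro u hu
  have hden : 0 < 1 - exp (-u) := sub_pos.mpr (exp_lt_one_iff.mpr (neg_lt_zero.mpr hu))
  have hpade : (1 + u / 2 + u ^ 2 / 12) * exp (-u) < 1 - u / 2 + u ^ 2 / 12 :=
    calc (1 + u / 2 + u ^ 2 / 12) * exp (-u)
        < (1 - u / 2 + u ^ 2 / 12) * exp u * exp (-u) :=
          mul_lt_mul_of_pos_right (pade_two_two_lt_exp hu) (exp_pos _)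
      _ = 1 - u / 2 + u ^ 2 / 12 := by
          rw [mul_assoc, ← exp_add, add_neg_cancel, exp_zero, mul_one]
  rw [gt_iff_lt, div_lt_iff₀ hden]
  linarith
end

section
/- For every real u > 0, ∑_{k=0}^∞ u^k / (k! · (k+1)!) ≥ u / (1 - e^{-u}). -/
/-!
Since `1 - e^{-u} = (e^u - 1) / e^u`, the claim is `u e^u ≤ S(u) (e^u - 1)` for the series `S` on
the left. Both sides are power series with nonnegative terms; by the Cauchy product the coefficient
of `u^(n+1)` is `1/n!` on the left and `∑_{k+l=n} 1/(k! (k+1)! (l+1)!)` on the right. The terms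
`k = 0, 1, 2` alone suffice: they exceed `1/n!` by `(n-2)(n-3)/(12 (n+1)!) ≥ 0`.
-/

open Finset Real
open scoped Nat

theorem one_div_factorial_le_sum_antidiagonal (n : ℕ) :
    (1 : ℝ) / n ! ≤ ∑ p ∈ antidiagonal n, 1 / ((p.1 ! : ℝ) * (p.1 + 1)! * (p.2 + 1)!) := by
  match n with
  | 0 => norm_num
  | 1 => norm_num [Nat.sum_antidiagonal_succ]
  | m + 2 =>
    rw [Nat.sum_antidiagonal_succ, Nat.sum_antidiagonal_succ, ← add_assoc]
    have hthird := single_le_sum (s := antidiagonal m)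
      (f := fun p : ℕ × ℕ => 1 / (((p.1 + 1 + 1)! : ℝ) * (p.1 + 1 + 1 + 1)! * (p.2 + 1)!))
      (fun _ _ => by positivity) (a := (0, m)) (mem_antidiagonal.mpr (zero_add m))
    refine le_trans ?_ (add_le_add le_rfl hthird)
    simp only [Nat.factorial_succ, Nat.factorial_zero, zero_add]
    push_cast
    have hm : (0 : ℝ) ≤ m * (m - 1) := by
      rcases m with _ | m
      · simp
      · push_cast
        nlinarith
    rw [← sub_nonneg]
    convert div_nonneg hm (by positivity : (0 : ℝ) ≤ 12 * ((m + 3) * (m + 2) * (m + 1) * m !))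
      using 1
    field_simp
    ring

-- `besselSeries u = I₁(2√u) / √u`
noncomputable def besselSeries (u : ℝ) : ℝ := ∑' k : ℕ, u ^ k / ((k ! : ℝ) * (k + 1)!)

lemma summable_norm_besselSeries (u : ℝ) :
    Summable fun k : ℕ => ‖u ^ k / ((k ! : ℝ) * (k + 1)!)‖ := by
  refine (summable_pow_div_factorial |u|).of_nonneg_of_le (fun _ => norm_nonneg _) fun k => ?_
  rw [norm_div, norm_pow, norm_eq_abs, norm_mul, RCLike.norm_natCast, RCLike.norm_natCast]
  gcongr
  exact le_mul_of_one_le_right (by positivity) (mod_cast (k + 1).factorial_pos)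

lemma hasSum_pow_div_factorial_exp (u : ℝ) : HasSum (fun n : ℕ => u ^ n / n !) (exp u) := by
  rw [exp_eq_exp_ℝ]
  exact NormedSpace.expSeries_div_hasSum_exp u

lemma hasSum_exp_sub_one (u : ℝ) :
    HasSum (fun n : ℕ => u ^ (n + 1) / (n + 1)!) (exp u - 1) := by
  simpa using (hasSum_nat_add_iff' 1).mpr (hasSum_pow_div_factorial_exp u)

lemma hasSum_mul_exp (u : ℝ) : HasSum (fun n : ℕ => u ^ (n + 1) / n !) (u * exp u) := by
  have h : (fun n : ℕ => u ^ (n + 1) / n !) = fun n => u * (u ^ n / n !) := by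
    ext n
    ring
  exact h ▸ (hasSum_pow_div_factorial_exp u).mul_left u

lemma hasSum_besselSeries_mul_exp_sub_one (u : ℝ) :
    HasSum
      (fun n : ℕ => u ^ (n + 1) * ∑ p ∈ antidiagonal n, 1 / ((p.1 ! : ℝ) * (p.1 + 1)! * (p.2 + 1)!))
      (besselSeries u * (exp u - 1)) := by
  have hf := summable_norm_besselSeries u
  have hg := summable_norm_iff.mpr (hasSum_exp_sub_one u).summable
  have hterm : ∀ n : ℕ,
      ∑ p ∈ antidiagonal n, u ^ p.1 / ((p.1 ! : ℝ) * (p.1 + 1)!) * (u ^ (p.2 + 1) / (p.2 + 1)!)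
        = u ^ (n + 1) * ∑ p ∈ antidiagonal n, 1 / ((p.1 ! : ℝ) * (p.1 + 1)! * (p.2 + 1)!) := by
    intro n
    rw [mul_sum]
    refine sum_congr rfl fun p hp => ?_
    rw [← mem_antidiagonal.mp hp]
    field_simp
    ring
  have hsummable := (summable_norm_sum_mul_antidiagonal_of_summable_norm hf hg).of_norm
  rw [besselSeries, ← (hasSum_exp_sub_one u).tsum_eq,
    tsum_mul_tsum_eq_tsum_sum_antidiagonal_of_summable_norm hf hg]
  simp only [hterm] at hsummable ⊢
  exact hsummable.hasSum

lemma mul_exp_le_besselSeries_mul_exp_sub_one {u : ℝ} (hu : 0 ≤ u) :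
    u * exp u ≤ besselSeries u * (exp u - 1) :=
  hasSum_le
    (fun n => by
      rw [div_eq_mul_one_div]
      exact mul_le_mul_of_nonneg_left (one_div_factorial_le_sum_antidiagonal n) (by positivity))
    (hasSum_mul_exp u) (hasSum_besselSeries_mul_exp_sub_one u)

theorem stmt_4 : ∀ u : ℝ, 0 < u →
    (∑' k : ℕ, u ^ k / ((k.factorial : ℝ) * ((k + 1).factorial : ℝ)))
      ≥ u / (1 - Real.exp (-u)) := by
  intro u hu
  have hexp : 1 < exp u := one_lt_exp_iff.mpr hu
  calc u / (1 - exp (-u)) = u * exp u / (exp u - 1) := by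
        rw [exp_neg]
        field_simp
    _ ≤ besselSeries u := by
        rw [div_le_iff₀ (by linarith)]
        exact mul_exp_le_besselSeries_mul_exp_sub_one hu.le
end

section
/- For every real t > 0, ∑_{k=0}^∞ (t/2)^{2k+1} / (k! · (k+1)!) > (t/2)^3 / (1 - e^{-(t/2)^2}). -/
open Real Finset

lemma exp_neg_le_T8 (y : ℝ) (hy : 0 ≤ y) :
    Real.exp (-y) ≤ 1 - y + y^2/2 - y^3/6 + y^4/24 - y^5/120 + y^6/720 - y^7/5040 + y^8/40320 := by
  have hS : (1 + y + y^2/2 + y^3/6 + y^4/24 + y^5/120 + y^6/720 + y^7/5040 + y^8/40320) ≤ Real.exp y := by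
    have := Real.sum_le_exp_of_nonneg hy 9
    simpa [Finset.sum_range_succ, Nat.factorial] using this
  have hSpos : (0:ℝ) < 1 + y + y^2/2 + y^3/6 + y^4/24 + y^5/120 + y^6/720 + y^7/5040 + y^8/40320 := by positivity
  have hTS : 1 ≤ (1 - y + y^2/2 - y^3/6 + y^4/24 - y^5/120 + y^6/720 - y^7/5040 + y^8/40320) *
      (1 + y + y^2/2 + y^3/6 + y^4/24 + y^5/120 + y^6/720 + y^7/5040 + y^8/40320) := by
    have key : (1 - y + y^2/2 - y^3/6 + y^4/24 - y^5/120 + y^6/720 - y^7/5040 + y^8/40320) *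
        (1 + y + y^2/2 + y^3/6 + y^4/24 + y^5/120 + y^6/720 + y^7/5040 + y^8/40320)
        = 1 + y^10/201600 + y^12/1451520 + y^14/33868800 + y^16/1625702400 := by ring
    rw [key]
    have h10 : 0 ≤ y^10 := by positivity
    have h12 : 0 ≤ y^12 := by positivity
    have h14 : 0 ≤ y^14 := by positivity
    have h16 : 0 ≤ y^16 := by positivity
    linarith
  have hE : Real.exp (-y) = (Real.exp y)⁻¹ := Real.exp_neg y
  rw [hE]
  calc (Real.exp y)⁻¹
      ≤ (1 + y + y^2/2 + y^3/6 + y^4/24 + y^5/120 + y^6/720 + y^7/5040 + y^8/40320)⁻¹ := by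
        apply inv_anti₀ hSpos hS
    _ ≤ _ := by
        rw [inv_le_iff_one_le_mul₀ hSpos]
        nlinarith [hTS]

lemma qpos (s : ℝ) (h0 : 0 ≤ s) (h5 : s ≤ 5/2) :
    0 < 452303/148635648 + (822959/371589120) * s - (226129/185794560) * s^2
      + (22321/30965760) * s^3 - (467/2211840) * s^4 + (893/23224320) * s^5
      - (43/11612160) * s^6 + (1/5806080) * s^7 := by
  have h1 : 0 ≤ s * (47/1000 - (1389/100000) * s)^2 := mul_nonneg h0 (sq_nonneg _)
  have h2 : 0 ≤ s^3 * (5/2 - s) := mul_nonneg (pow_nonneg h0 3) (by linarith)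
  have h3 : 0 ≤ s^5 * (5/2 - s) := mul_nonneg (pow_nonneg h0 5) (by linarith)
  have h4 : 0 ≤ s^7 := pow_nonneg h0 7
  have h5' : 0 ≤ s^2 := sq_nonneg s
  have h6 : 0 ≤ s^3 := pow_nonneg h0 3
  have h7 : 0 ≤ s^5 := pow_nonneg h0 5
  nlinarith [h1, h2, h3, h4, h5', h6, h7, h0]

lemma key_small (y : ℝ) (h0 : 0 < y) (h5 : y ≤ 5/2) :
    (1 + y/2 + y^2/12 + y^3/144) *
      (y - y^2/2 + y^3/6 - y^4/24 + y^5/120 - y^6/720 + y^7/5040 - y^8/40320) > y := by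
  have hq := qpos (5/2 - y) (by linarith) (by linarith)
  have h4 : 0 < y^4 := by positivity
  nlinarith [mul_pos h4 hq]

lemma key_large (y : ℝ) (h5 : 5/2 ≤ y) :
    241 * y < 221 * (1 + y/2 + y^2/12 + y^3/144) := by
  nlinarith [sq_nonneg (y - 3), mul_nonneg (by linarith : (0:ℝ) ≤ y - 5/2) (sq_nonneg (y - 3)),
    sq_nonneg y, mul_nonneg (by linarith : (0:ℝ) ≤ y - 5/2) (by linarith : (0:ℝ) ≤ y - 5/2)]

lemma exp_large (y : ℝ) (h5 : 5/2 ≤ y) : Real.exp (-y) ≤ 20/241 := by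
  have h1 : (241:ℝ)/20 ≤ Real.exp (5/2) := by
    have := Real.sum_le_exp_of_nonneg (by norm_num : (0:ℝ) ≤ 5/2) 8
    simp only [Finset.sum_range_succ, Finset.sum_range_zero, Nat.factorial] at this
    norm_num at this ⊢
    linarith
  have h2 : Real.exp (-y) ≤ Real.exp (-(5/2)) := Real.exp_le_exp.2 (by linarith)
  have h3 : Real.exp (-(5/2)) = (Real.exp (5/2))⁻¹ := Real.exp_neg _
  have hpos : (0:ℝ) < Real.exp (5/2) := Real.exp_pos _
  have : (Real.exp (5/2))⁻¹ ≤ 20/241 := by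
    rw [inv_le_iff_one_le_mul₀ hpos]
    nlinarith
  linarith [h2, h3.le]

theorem stmt_5 : ∀ t : ℝ, 0 < t →
    (∑' k : ℕ, (t / 2) ^ (2 * k + 1) / ((k.factorial : ℝ) * ((k + 1).factorial : ℝ)))
      > (t / 2) ^ 3 / (1 - Real.exp (-(t / 2) ^ 2)) := by
  intro t ht
  set x := t / 2 with hxdef
  have hx : 0 < x := by positivity
  have hy : 0 < x ^ 2 := by positivity
  have hden : 0 < 1 - Real.exp (-(x ^ 2)) := by
    have h1 : Real.exp (-(x ^ 2)) < 1 := by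
      rw [Real.exp_lt_one_iff]; linarith
    linarith
  -- summability
  have hle : ∀ k : ℕ, x ^ (2 * k + 1) / ((k.factorial : ℝ) * ((k + 1).factorial : ℝ))
      ≤ x * ((x ^ 2) ^ k / (k.factorial : ℝ)) := by
    intro k
    have hf1 : (1 : ℝ) ≤ ((k + 1).factorial : ℝ) := by
      exact_mod_cast Nat.one_le_iff_ne_zero.2 (Nat.factorial_ne_zero _)
    have hfk : (0 : ℝ) < (k.factorial : ℝ) := by exact_mod_cast k.factorial_pos
    have hxp : (0 : ℝ) ≤ x ^ (2 * k + 1) := by positivity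
    have heq : x * (x ^ 2) ^ k = x ^ (2 * k + 1) := by
      rw [← pow_mul]; ring
    rw [← mul_div_assoc, heq, div_le_div_iff₀ (by positivity) hfk]
    have h2 : (k.factorial : ℝ) ≤ (k.factorial : ℝ) * ((k + 1).factorial : ℝ) := by
      nlinarith
    nlinarith [mul_le_mul_of_nonneg_left h2 hxp]
  have hsum : Summable (fun k : ℕ => x ^ (2 * k + 1) / ((k.factorial : ℝ) * ((k + 1).factorial : ℝ))) := by
    apply Summable.of_nonneg_of_le (fun k => by positivity) hle
    simpa [mul_div_assoc] using (Real.summable_pow_div_factorial (x ^ 2)).mul_left x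
  have hpartial : ∑ k ∈ Finset.range 4, x ^ (2 * k + 1) / ((k.factorial : ℝ) * ((k + 1).factorial : ℝ))
      = x + x ^ 3 / 2 + x ^ 5 / 12 + x ^ 7 / 144 := by
    simp [Finset.sum_range_succ, Nat.factorial]
    norm_num
  have hA : x + x ^ 3 / 2 + x ^ 5 / 12 + x ^ 7 / 144
      ≤ ∑' k : ℕ, x ^ (2 * k + 1) / ((k.factorial : ℝ) * ((k + 1).factorial : ℝ)) := by
    rw [← hpartial]
    exact Summable.sum_le_tsum _ (fun i _ => by positivity) hsum
  have hApos : 0 < x + x ^ 3 / 2 + x ^ 5 / 12 + x ^ 7 / 144 := by positivity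
  rw [gt_iff_lt, div_lt_iff₀ hden]
  rcases le_or_gt (x ^ 2) (5 / 2) with hc | hc
  · -- small case
    have hE := exp_neg_le_T8 (x ^ 2) hy.le
    have hB : (x ^ 2) - (x ^ 2) ^ 2 / 2 + (x ^ 2) ^ 3 / 6 - (x ^ 2) ^ 4 / 24 + (x ^ 2) ^ 5 / 120
        - (x ^ 2) ^ 6 / 720 + (x ^ 2) ^ 7 / 5040 - (x ^ 2) ^ 8 / 40320 ≤ 1 - Real.exp (-(x ^ 2)) := by
      linarith
    have hk := key_small (x ^ 2) hy hc
    calc x ^ 3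
        < (x + x ^ 3 / 2 + x ^ 5 / 12 + x ^ 7 / 144) *
            ((x ^ 2) - (x ^ 2) ^ 2 / 2 + (x ^ 2) ^ 3 / 6 - (x ^ 2) ^ 4 / 24 + (x ^ 2) ^ 5 / 120
              - (x ^ 2) ^ 6 / 720 + (x ^ 2) ^ 7 / 5040 - (x ^ 2) ^ 8 / 40320) := by
          nlinarith [mul_lt_mul_of_pos_left hk hx]
      _ ≤ (x + x ^ 3 / 2 + x ^ 5 / 12 + x ^ 7 / 144) * (1 - Real.exp (-(x ^ 2))) :=
          mul_le_mul_of_nonneg_left hB hApos.le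
      _ ≤ _ := mul_le_mul_of_nonneg_right hA hden.le
  · -- large case
    have hE := exp_large (x ^ 2) hc.le
    have hden' : (221 : ℝ) / 241 ≤ 1 - Real.exp (-(x ^ 2)) := by linarith
    have hk := key_large (x ^ 2) hc.le
    calc x ^ 3
        < (x + x ^ 3 / 2 + x ^ 5 / 12 + x ^ 7 / 144) * (221 / 241) := by
          nlinarith [mul_lt_mul_of_pos_left hk hx]
      _ ≤ (x + x ^ 3 / 2 + x ^ 5 / 12 + x ^ 7 / 144) * (1 - Real.exp (-(x ^ 2))) :=
          mul_le_mul_of_nonneg_left hden' hApos.le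
      _ ≤ _ := mul_le_mul_of_nonneg_right hA hden.le
end

section
/- For all real t > 0, the function h(t) = e^{1/t} - ψ'(t) is positive, where ψ' is the trigamma function. -/
/-!
Comparing `1 / (t + n + 1) ^ 2` with the telescoping term `1 / (t + n) - 1 / (t + n + 1)` gives
`ψ'(t) ≤ 1 / t ^ 2 + 1 / t`. With `x = 1 / t` it remains to see `x + x ^ 2 < exp x`, which follows
from `1 + x + x ^ 2 / 2 + x ^ 3 / 6 ≤ exp x` because `1 - x ^ 2 / 2 + x ^ 3 / 6 ≥ 1 / 3` for `x ≥ 0`.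
-/

open Real Filter Topology

theorem Antitone.hasSum_sub_succ {f : ℕ → ℝ} {l : ℝ} (hf : Antitone f)
    (hl : Tendsto f atTop (𝓝 l)) : HasSum (fun n => f n - f (n + 1)) (f 0 - l) := by
  refine (hasSum_iff_tendsto_nat_of_nonneg (fun n => sub_nonneg.2 (hf n.le_succ)) _).2 ?_
  simp only [Finset.sum_range_sub']
  exact tendsto_const_nhds.sub hl

theorem hasSum_one_div_add_sub_one_div_add_succ {t : ℝ} (ht : 0 < t) :
    HasSum (fun n : ℕ => 1 / (t + n) - 1 / (t + ↑(n + 1))) (1 / t) := by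
  have hanti : Antitone fun n : ℕ => 1 / (t + n) := fun m n hmn => by
    have : (m : ℝ) ≤ n := Nat.cast_le.2 hmn
    show 1 / (t + n) ≤ 1 / (t + m)
    gcongr
  have hlim : Tendsto (fun n : ℕ => 1 / (t + n)) atTop (𝓝 0) :=
    tendsto_const_nhds.div_atTop (tendsto_atTop_add_const_left _ t tendsto_natCast_atTop_atTop)
  simpa using hanti.hasSum_sub_succ hlim

theorem one_div_add_one_sq_le {s : ℝ} (hs : 0 < s) :
    1 / (s + 1) ^ 2 ≤ 1 / s - 1 / (s + 1) := by
  rw [div_sub_div _ _ hs.ne' (by positivity)]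
  apply div_le_div₀ <;> nlinarith

theorem tsum_one_div_add_sq_le {t : ℝ} (ht : 0 < t) :
    ∑' n : ℕ, 1 / (t + n) ^ 2 ≤ 1 / t ^ 2 + 1 / t := by
  have htele := hasSum_one_div_add_sub_one_div_add_succ ht
  have hle (n : ℕ) : 1 / (t + ↑(n + 1)) ^ 2 ≤ 1 / (t + n) - 1 / (t + ↑(n + 1)) := by
    rw [Nat.cast_succ, ← add_assoc]
    exact one_div_add_one_sq_le (by positivity)
  have hshift : Summable fun n : ℕ => 1 / (t + ↑(n + 1)) ^ 2 :=
    htele.summable.of_nonneg_of_le (fun n => by positivity) hle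
  have htail : ∑' n : ℕ, 1 / (t + ↑(n + 1)) ^ 2 ≤ 1 / t :=
    (Summable.tsum_le_tsum hle hshift htele.summable).trans_eq htele.tsum_eq
  have hsum : Summable fun n : ℕ => 1 / (t + n) ^ 2 := (summable_nat_add_iff 1).1 hshift
  rw [hsum.tsum_eq_zero_add]
  simpa using htail

theorem add_sq_lt_exp {x : ℝ} (hx : 0 < x) : x + x ^ 2 < exp x := by
  have h := sum_le_exp_of_nonneg hx.le 4
  simp only [Finset.sum_range_succ, Finset.sum_range_zero, Nat.factorial] at h
  norm_num at h
  nlinarith [mul_nonneg (sq_nonneg (x - 2)) hx.le]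

theorem stmt_7 : ∀ t : ℝ, 0 < t →
    0 < Real.exp (1 / t) - ∑' n : ℕ, 1 / (t + n) ^ 2 := by
  intro t ht
  have hexp := add_sq_lt_exp (one_div_pos.2 ht)
  rw [div_pow, one_pow] at hexp
  linarith [tsum_one_div_add_sq_le ht]
end

section
/- The function h(t) = e^{1/t} - ψ'(t) is completely monotonic on (0, ∞); that is, h is infinitely differentiable on (0,∞) and (-1)^k h^{(k)}(t) ≥ 0 for all t > 0 and all integers k ≥ 0. -/
open Filter Set MeasureTheory
open scoped Topology Nat

noncomputable def sP (k : ℕ) (t : ℝ) : ℝ := ∑' n : ℕ, 1 / (t + n) ^ (k + 2)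
noncomputable def sa (k m : ℕ) : ℝ := (∏ i ∈ Finset.range k, (m + i : ℝ)) / m !
noncomputable def sE (k : ℕ) (t : ℝ) : ℝ := ∑' m : ℕ, sa k m / t ^ (m + k)

lemma sa_nonneg (k m : ℕ) : 0 ≤ sa k m := by
  unfold sa
  apply div_nonneg _ (by positivity)
  exact Finset.prod_nonneg fun i _ => by positivity

lemma sa_succ (k m : ℕ) : sa (k + 1) m = sa k m * (m + k) := by
  unfold sa
  rw [Finset.prod_range_succ]
  ring

lemma fact_prod_shift (m : ℕ) : ∀ k, m ! * ∏ i ∈ Finset.range k, (m + 1 + i) = (m + k)! := by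
  intro k
  induction k with
  | zero => simp
  | succ k ih =>
    rw [Finset.prod_range_succ, ← mul_assoc, ih]
    have : m + (k + 1) = (m + k) + 1 := by omega
    rw [this, Nat.factorial_succ]
    ring

lemma prod_le_nat (k m : ℕ) : (∏ i ∈ Finset.range k, (m + i)) ≤ 2 ^ (m + k) * k ! := by
  have h1 : (∏ i ∈ Finset.range k, (m + i)) ≤ ∏ i ∈ Finset.range k, (m + 1 + i) :=
    Finset.prod_le_prod' fun i _ => by omega
  have h3 : (m + k).choose k * k ! * m ! = (m + k)! := by
    have := Nat.choose_mul_factorial_mul_factorial (Nat.le_add_left k m)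
    simpa [Nat.add_sub_cancel] using this
  have h4 : (m + k).choose k ≤ 2 ^ (m + k) := by
    calc (m + k).choose k ≤ ∑ j ∈ Finset.range (m + k + 1), (m + k).choose j :=
          Finset.single_le_sum (fun j _ => Nat.zero_le _) (by simp [Nat.lt_succ_iff])
    _ = 2 ^ (m + k) := Nat.sum_range_choose (m + k)
  have h5 : (∏ i ∈ Finset.range k, (m + 1 + i)) = (m + k).choose k * k ! := by
    have hm : 0 < m ! := Nat.factorial_pos m
    apply Nat.eq_of_mul_eq_mul_left hm
    rw [fact_prod_shift m k, ← h3]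
    ring
  calc (∏ i ∈ Finset.range k, (m + i)) ≤ (m + k).choose k * k ! := h5 ▸ h1
  _ ≤ 2 ^ (m + k) * k ! := Nat.mul_le_mul_right _ h4

lemma sa_le (k m : ℕ) : sa k m ≤ (2:ℝ) ^ (m + k) * k ! / m ! := by
  unfold sa
  have h : (∏ i ∈ Finset.range k, (m + i : ℝ)) ≤ (2:ℝ) ^ (m + k) * k ! := by
    exact_mod_cast prod_le_nat k m
  have hm : (0:ℝ) < m ! := by exact_mod_cast Nat.factorial_pos m
  gcongr

/-- summability of the E-series terms at any positive base point -/
lemma summable_sE {b : ℝ} (hb : 0 < b) (k : ℕ) :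
    Summable (fun m : ℕ => sa k m / b ^ (m + k)) := by
  refine Summable.of_nonneg_of_le (fun m => div_nonneg (sa_nonneg k m) (by positivity)) (fun m => ?_)
    (((Real.summable_pow_div_factorial (2 / b))).mul_left ((k ! : ℝ) * (2 / b) ^ k))
  calc sa k m / b ^ (m + k) ≤ ((2:ℝ) ^ (m + k) * k ! / m !) / b ^ (m + k) := by
        have hbk : (0:ℝ) < b ^ (m + k) := by positivity
        gcongr
        exact sa_le k m
  _ = (k ! : ℝ) * (2 / b) ^ k * ((2 / b) ^ m / m !) := by
        rw [div_pow, pow_add, pow_add]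
        field_simp
        ring
        rw [← mul_pow, mul_inv_cancel₀ hb.ne', one_pow, one_mul]

lemma summable_sP {b : ℝ} (hb : 0 < b) (p : ℕ) :
    Summable (fun n : ℕ => 1 / (b + n) ^ (p + 2)) := by
  set c := min b 1 with hc
  have hc0 : 0 < c := lt_min hb one_pos
  have hbase : Summable (fun n : ℕ => 1 / ((n : ℝ) + 1) ^ 2) := by
    have h0 : Summable (fun n : ℕ => 1 / (n : ℝ) ^ 2) :=
      Real.summable_one_div_nat_pow.mpr one_lt_two
    have := (summable_nat_add_iff 1).mpr h0
    simpa [Nat.cast_add, Nat.cast_one] using this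
  refine Summable.of_nonneg_of_le (fun n => by positivity) (fun n => ?_)
    (hbase.mul_left (1 / (b ^ p * c ^ 2)))
  have hbn : (0:ℝ) < b + n := by positivity
  have key : b ^ p * (c ^ 2 * ((n:ℝ) + 1) ^ 2) ≤ (b + n) ^ (p + 2) := by
    rw [pow_add]
    apply mul_le_mul ?_ ?_ (by positivity) (by positivity)
    · exact pow_le_pow_left₀ hb.le (by linarith [Nat.cast_nonneg (α := ℝ) n]) p
    · rw [← mul_pow]
      apply pow_le_pow_left₀ (by positivity)
      rcases le_total b 1 with h | h
      · have : c = b := min_eq_left h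
        rw [this]; nlinarith [Nat.cast_nonneg (α := ℝ) n]
      · have : c = 1 := min_eq_right h
        rw [this]; nlinarith [Nat.cast_nonneg (α := ℝ) n]
  rw [div_mul_div_comm, one_mul]
  apply div_le_div_of_nonneg_left zero_le_one (by positivity)
  calc b ^ p * c ^ 2 * ((n:ℝ) + 1) ^ 2 = b ^ p * (c ^ 2 * ((n:ℝ) + 1) ^ 2) := by ring
  _ ≤ (b + n) ^ (p + 2) := key

lemma hasDerivAt_tsum_Ioi {g g' : ℕ → ℝ → ℝ} {b t : ℝ} (ht : b < t)
    {u : ℕ → ℝ} (hu : Summable u)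
    (hg : ∀ n y, b < y → HasDerivAt (g n) (g' n y) y)
    (hbd : ∀ n y, b < y → |g' n y| ≤ u n)
    (hsum : ∀ y, b < y → Summable (fun n => g n y)) :
    HasDerivAt (fun y => ∑' n, g n y) (∑' n, g' n t) t := by
  apply hasDerivAt_of_tendstoUniformlyOn (f := fun N y => ∑ n ∈ Finset.range N, g n y)
      (f' := fun N y => ∑ n ∈ Finset.range N, g' n y) isOpen_Ioi
      (tendstoUniformlyOn_tsum_nat hu fun n x hx => by
        simpa [Real.norm_eq_abs] using hbd n x hx)
      (Eventually.of_forall fun N x hx => HasDerivAt.fun_sum fun n _ => hg n x hx)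
      (fun x hx => ((hsum x hx).hasSum.tendsto_sum_nat))
      (Set.mem_Ioi.mpr ht)

lemma hasDerivAt_term_P (p : ℕ) (c : ℝ) {y : ℝ} (h : 0 < y + c) :
    HasDerivAt (fun x : ℝ => 1 / (x + c) ^ p) (-(p : ℝ) / (y + c) ^ (p + 1)) y := by
  have h1 : HasDerivAt (fun x : ℝ => x + c) 1 y := (hasDerivAt_id y).add_const c
  have h2 := (hasDerivAt_zpow (-(p : ℤ)) (y + c) (Or.inl h.ne')).comp y h1
  have e2 : (-(p : ℤ)) - 1 = -((p + 1 : ℕ) : ℤ) := by push_cast; ring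
  rw [e2] at h2
  simp only [Function.comp_def, zpow_neg, zpow_natCast, ← one_div] at h2
  refine h2.congr_deriv ?_
  push_cast
  ring

lemma hasDerivAt_term_E (q : ℕ) (c : ℝ) {y : ℝ} (h : 0 < y) :
    HasDerivAt (fun x : ℝ => c / x ^ q) (-(q : ℝ) * c / y ^ (q + 1)) y := by
  have h2 := (hasDerivAt_zpow (-(q : ℤ)) y (Or.inl h.ne')).const_mul c
  have e2 : (-(q : ℤ)) - 1 = -((q + 1 : ℕ) : ℤ) := by push_cast; ring
  rw [e2] at h2
  simp only [zpow_neg, zpow_natCast] at h2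
  have hfun : (fun x : ℝ => c * (x ^ q)⁻¹) = fun x : ℝ => c / x ^ q := by
    funext x; rw [div_eq_mul_inv]
  rw [hfun] at h2
  refine h2.congr_deriv ?_
  push_cast
  ring

lemma hasDerivAt_sP (k : ℕ) {t : ℝ} (ht : 0 < t) :
    HasDerivAt (sP k) (-((k : ℝ) + 2) * sP (k + 1) t) t := by
  have hb : 0 < t / 2 := by linarith
  have h1 : Summable (fun n : ℕ => ((k : ℝ) + 2) / (t / 2 + n) ^ (k + 3)) := by
    have := (summable_sP hb (k + 1)).mul_left ((k : ℝ) + 2)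
    simpa only [mul_one_div] using this
  have h2 : ∀ (n : ℕ) (y : ℝ), t / 2 < y →
      HasDerivAt (fun x : ℝ => 1 / (x + n) ^ (k + 2)) (-((k : ℝ) + 2) / (y + n) ^ (k + 3)) y := by
    intro n y hy
    have hyn : 0 < y + n := by have := Nat.cast_nonneg (α := ℝ) n; linarith
    have := hasDerivAt_term_P (k + 2) (n : ℝ) hyn
    convert this using 1
    all_goals (push_cast; ring)
  have h3 : ∀ (n : ℕ) (y : ℝ), t / 2 < y →
      |(-((k : ℝ) + 2) / (y + n) ^ (k + 3))| ≤ ((k : ℝ) + 2) / (t / 2 + n) ^ (k + 3) := by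
    intro n y hy
    have hyn : 0 < y + n := by have := Nat.cast_nonneg (α := ℝ) n; linarith
    have hbn : 0 < t / 2 + n := by have := Nat.cast_nonneg (α := ℝ) n; linarith
    rw [abs_div, abs_neg, abs_of_nonneg (by positivity : (0:ℝ) ≤ (k : ℝ) + 2),
      abs_of_nonneg (by positivity : (0:ℝ) ≤ (y + n) ^ (k + 3))]
    gcongr
    all_goals linarith
  have h4 : ∀ y : ℝ, t / 2 < y → Summable (fun n : ℕ => 1 / (y + n) ^ (k + 2)) :=
    fun y hy => summable_sP (lt_trans hb hy) k
  have key := hasDerivAt_tsum_Ioi (by linarith : t / 2 < t) h1 h2 h3 h4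
  have hval : -((k : ℝ) + 2) * sP (k + 1) t = ∑' n : ℕ, -((k : ℝ) + 2) / (t + n) ^ (k + 3) := by
    unfold sP
    rw [← tsum_mul_left]
    simp only [mul_one_div]
  rw [show sP k = fun y : ℝ => ∑' n : ℕ, 1 / (y + n) ^ (k + 2) from rfl, hval]
  exact key

lemma hasDerivAt_sE (k : ℕ) {t : ℝ} (ht : 0 < t) :
    HasDerivAt (sE k) (-(sE (k + 1) t)) t := by
  have hb : 0 < t / 2 := by linarith
  have h1 : Summable (fun m : ℕ => sa (k + 1) m / (t / 2) ^ (m + k + 1)) :=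
    summable_sE hb (k + 1)
  have h2 : ∀ (m : ℕ) (y : ℝ), t / 2 < y →
      HasDerivAt (fun x : ℝ => sa k m / x ^ (m + k)) (-(sa (k + 1) m / y ^ (m + k + 1))) y := by
    intro m y hy
    have hy0 : 0 < y := by linarith
    have := hasDerivAt_term_E (m + k) (sa k m) hy0
    convert this using 1
    all_goals (rw [sa_succ]; try (push_cast; ring))
  have h3 : ∀ (m : ℕ) (y : ℝ), t / 2 < y →
      |(-(sa (k + 1) m / y ^ (m + k + 1)))| ≤ sa (k + 1) m / (t / 2) ^ (m + k + 1) := by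
    intro m y hy
    have hy0 : 0 < y := by linarith
    rw [abs_neg, abs_of_nonneg (div_nonneg (sa_nonneg _ _) (by positivity))]
    gcongr
    all_goals first | exact sa_nonneg _ _ | linarith
  have h4 : ∀ y : ℝ, t / 2 < y → Summable (fun m : ℕ => sa k m / y ^ (m + k)) :=
    fun y hy => summable_sE (lt_trans hb hy) k
  have key := hasDerivAt_tsum_Ioi (by linarith : t / 2 < t) h1 h2 h3 h4
  have hval : -(sE (k + 1) t) = ∑' m : ℕ, -(sa (k + 1) m / t ^ (m + k + 1)) := by
    unfold sE
    rw [tsum_neg]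
    rfl

  rw [show sE k = fun y : ℝ => ∑' m : ℕ, sa k m / y ^ (m + k) from rfl, hval]
  exact key

lemma sE_zero {t : ℝ} (ht : 0 < t) : sE 0 t = Real.exp (1 / t) := by
  unfold sE
  rw [Real.exp_eq_exp_ℝ, NormedSpace.exp_eq_tsum_div]
  congr 1
  ext m
  rw [sa]
  simp only [Finset.range_zero, Finset.prod_empty, add_zero]
  rw [div_pow, one_pow]
  field_simp


noncomputable def sS (x : ℝ) : ℝ := ∑' j : ℕ, x ^ j / (j ! * (j + 1)!)

lemma summable_sS {x : ℝ} (hx : 0 ≤ x) : Summable (fun j : ℕ => x ^ j / (j ! * (j + 1)!)) := by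
  refine Summable.of_nonneg_of_le (fun j => by positivity) (fun j => ?_)
    (Real.summable_pow_div_factorial x)
  have h1 : (1:ℝ) ≤ ((j + 1)! : ℝ) := by exact_mod_cast Nat.one_le_iff_ne_zero.mpr (Nat.factorial_pos (j+1)).ne'
  have hj : (0:ℝ) < (j ! : ℝ) := by exact_mod_cast Nat.factorial_pos j
  apply div_le_div_of_nonneg_left (by positivity) hj
  nlinarith

lemma lint_exp (p : ℕ) {c : ℝ} (hc : 0 < c) :
    ∫⁻ x in Set.Ioi (0:ℝ), ENNReal.ofReal (x ^ p * Real.exp (-(c * x)))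
      = ENNReal.ofReal ((p ! : ℝ) / c ^ (p + 1)) := by
  have heq : ∀ x : ℝ, x ∈ Set.Ioi (0:ℝ) →
      x ^ ((p : ℝ)) * Real.exp (-c * x ^ (1:ℝ)) = x ^ p * Real.exp (-(c * x)) := by
    intro x hx
    rw [Real.rpow_one, Real.rpow_natCast, neg_mul]
  have hint : IntegrableOn (fun x : ℝ => x ^ p * Real.exp (-(c * x))) (Set.Ioi 0) := by
    have h0 := integrableOn_rpow_mul_exp_neg_mul_rpow
      (p := 1) (s := (p : ℝ)) (b := c) (lt_of_lt_of_le neg_one_lt_zero (Nat.cast_nonneg p)) one_pos hc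
    exact h0.congr_fun heq measurableSet_Ioi
  have hval : ∫ x in Set.Ioi (0:ℝ), x ^ p * Real.exp (-(c * x)) = (p ! : ℝ) / c ^ (p + 1) := by
    have h1 := Real.integral_rpow_mul_exp_neg_mul_Ioi
      (a := (p : ℝ) + 1) (r := c) (by positivity) hc
    rw [show (p : ℝ) + 1 - 1 = (p : ℝ) by ring] at h1
    rw [show ∫ x in Set.Ioi (0:ℝ), x ^ p * Real.exp (-(c * x))
        = ∫ x in Set.Ioi (0:ℝ), x ^ ((p : ℝ)) * Real.exp (-(c * x)) from
      (setIntegral_congr_fun measurableSet_Ioi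
        (fun x hx => by rw [Real.rpow_natCast])).symm]
    rw [h1, Real.Gamma_nat_eq_factorial,
      show (p : ℝ) + 1 = ((p + 1 : ℕ) : ℝ) by push_cast; ring,
      Real.rpow_natCast, div_pow, one_pow]
    ring
  rw [← ofReal_integral_eq_lintegral_ofReal hint
    ((ae_restrict_iff' measurableSet_Ioi).2
      (ae_of_all _ fun x hx => by have h0 : (0:ℝ) < x := hx; positivity)), hval]

lemma P_side (k : ℕ) {t : ℝ} (ht : 0 < t) :
    ENNReal.ofReal (((k + 1)! : ℝ) * sP k t)
      = ∫⁻ x in Set.Ioi (0:ℝ),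
          ENNReal.ofReal (x ^ (k + 1) * Real.exp (-(t * x)) / (1 - Real.exp (-x))) := by
  have hpt : ∀ x : ℝ, x ∈ Set.Ioi (0:ℝ) →
      ENNReal.ofReal (x ^ (k + 1) * Real.exp (-(t * x)) / (1 - Real.exp (-x)))
        = ∑' n : ℕ, ENNReal.ofReal (x ^ (k + 1) * Real.exp (-((t + n) * x))) := by
    intro x hx
    rw [Set.mem_Ioi] at hx
    have he1 : Real.exp (-x) < 1 := by
      rw [Real.exp_lt_one_iff]; linarith
    have hterm : ∀ n : ℕ, x ^ (k + 1) * Real.exp (-((t + n) * x))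
        = (x ^ (k + 1) * Real.exp (-(t * x))) * Real.exp (-x) ^ n := by
      intro n
      rw [← Real.exp_nat_mul, mul_assoc, ← Real.exp_add]
      congr 1
      ring
    have hsum : Summable (fun n : ℕ => x ^ (k + 1) * Real.exp (-((t + n) * x))) := by
      simp only [hterm]
      exact (summable_geometric_of_lt_one (Real.exp_nonneg _) he1).mul_left _
    rw [← ENNReal.ofReal_tsum_of_nonneg (fun n => by positivity) hsum]
    congr 1
    symm
    calc ∑' n : ℕ, x ^ (k + 1) * Real.exp (-((t + n) * x))
        = ∑' n : ℕ, (x ^ (k + 1) * Real.exp (-(t * x))) * Real.exp (-x) ^ n := by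
          congr 1; ext n; exact hterm n
      _ = (x ^ (k + 1) * Real.exp (-(t * x))) * (1 - Real.exp (-x))⁻¹ := by
          rw [tsum_mul_left, tsum_geometric_of_lt_one (Real.exp_nonneg _) he1]
      _ = x ^ (k + 1) * Real.exp (-(t * x)) / (1 - Real.exp (-x)) := by
          rw [div_eq_mul_inv]
  rw [setLIntegral_congr_fun measurableSet_Ioi hpt]
  rw [lintegral_tsum (fun n => ((Measurable.ennreal_ofReal (by fun_prop)).aemeasurable))]
  have hev : ∀ n : ℕ, ∫⁻ x in Set.Ioi (0:ℝ),
      ENNReal.ofReal (x ^ (k + 1) * Real.exp (-((t + n) * x)))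
        = ENNReal.ofReal (((k + 1)! : ℝ) / (t + n) ^ (k + 2)) := by
    intro n
    have hc : (0:ℝ) < t + n := by have := Nat.cast_nonneg (α := ℝ) n; linarith
    exact lint_exp (k + 1) hc
  simp only [hev]
  rw [← ENNReal.ofReal_tsum_of_nonneg
    (fun n => by have := Nat.cast_nonneg (α := ℝ) n; positivity)
    (by
      have := (summable_sP ht k).mul_left (((k + 1)! : ℝ))
      simpa only [mul_one_div] using this)]
  congr 1
  unfold sP
  rw [← tsum_mul_left]
  simp only [mul_one_div]

lemma sa_shift (k m : ℕ) : sa k (m + 1) = ((m + k)! : ℝ) / (m ! * (m + 1)!) := by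
  have hm : (0:ℝ) < (m ! : ℝ) := by exact_mod_cast Nat.factorial_pos m
  have hcast : (m ! : ℝ) * (∏ i ∈ Finset.range k, ((m : ℝ) + 1 + i)) = ((m + k)! : ℝ) := by
    exact_mod_cast congrArg (Nat.cast : ℕ → ℝ) (fact_prod_shift m k)
  unfold sa
  have hprod : (∏ i ∈ Finset.range k, (((m + 1 : ℕ) : ℝ) + i))
      = (∏ i ∈ Finset.range k, ((m : ℝ) + 1 + i)) := by
    congr 1; ext i; push_cast; ring
  rw [hprod, show (∏ i ∈ Finset.range k, ((m : ℝ) + 1 + i)) = ((m + k)! : ℝ) / (m ! : ℝ) from by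
    rw [eq_div_iff hm.ne']; linarith [hcast]]
  rw [div_div]

lemma E_side (k : ℕ) {t : ℝ} (ht : 0 < t) :
    ∫⁻ x in Set.Ioi (0:ℝ), ENNReal.ofReal (x ^ k * sS x * Real.exp (-(t * x)))
      = ENNReal.ofReal (∑' m : ℕ, sa k (m + 1) / t ^ (m + k + 1)) := by
  have hpt : ∀ x : ℝ, x ∈ Set.Ioi (0:ℝ) →
      ENNReal.ofReal (x ^ k * sS x * Real.exp (-(t * x)))
        = ∑' m : ℕ, ENNReal.ofReal ((1 / (m ! * (m + 1)!)) * (x ^ (m + k) * Real.exp (-(t * x)))) := by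
    intro x hx
    rw [Set.mem_Ioi] at hx
    have hsum : Summable (fun m : ℕ => (1 / ((m ! : ℝ) * (m + 1)!)) * (x ^ (m + k) * Real.exp (-(t * x)))) := by
      have h1 : Summable (fun m : ℕ => x ^ m / (m ! * (m + 1)!)) := summable_sS hx.le
      have h2 := (h1.mul_left (x ^ k * Real.exp (-(t * x))))
      refine h2.congr fun m => ?_
      rw [pow_add]
      field_simp
    rw [← ENNReal.ofReal_tsum_of_nonneg (fun m => by positivity) hsum]
    congr 1
    have : ∑' m : ℕ, (1 / ((m ! : ℝ) * (m + 1)!)) * (x ^ (m + k) * Real.exp (-(t * x)))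
        = (x ^ k * Real.exp (-(t * x))) * ∑' m : ℕ, x ^ m / (m ! * (m + 1)!) := by
      rw [← tsum_mul_left]
      congr 1; ext m
      rw [pow_add]
      field_simp
    rw [this, show sS x = ∑' j : ℕ, x ^ j / (j ! * (j + 1)!) from rfl]
    ring
  rw [setLIntegral_congr_fun measurableSet_Ioi hpt]
  rw [lintegral_tsum (fun m => ((Measurable.ennreal_ofReal (by fun_prop)).aemeasurable))]
  have hev : ∀ m : ℕ, ∫⁻ x in Set.Ioi (0:ℝ),
      ENNReal.ofReal ((1 / ((m ! : ℝ) * (m + 1)!)) * (x ^ (m + k) * Real.exp (-(t * x))))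
        = ENNReal.ofReal (sa k (m + 1) / t ^ (m + k + 1)) := by
    intro m
    have hc0 : (0:ℝ) ≤ 1 / ((m ! : ℝ) * (m + 1)!) := by positivity
    have : ∀ x : ℝ, ENNReal.ofReal ((1 / ((m ! : ℝ) * (m + 1)!)) * (x ^ (m + k) * Real.exp (-(t * x))))
        = ENNReal.ofReal (1 / ((m ! : ℝ) * (m + 1)!)) * ENNReal.ofReal (x ^ (m + k) * Real.exp (-(t * x))) :=
      fun x => ENNReal.ofReal_mul hc0
    simp only [this]
    rw [lintegral_const_mul _ (Measurable.ennreal_ofReal (by fun_prop))]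
    rw [lint_exp (m + k) ht]
    rw [← ENNReal.ofReal_mul hc0]
    congr 1
    rw [sa_shift]
    field_simp
    try ring
  simp only [hev]
  rw [← ENNReal.ofReal_tsum_of_nonneg
    (fun m => div_nonneg (sa_nonneg _ _) (by positivity))
    (by
      have h0 : Summable (fun m : ℕ => sa k m / t ^ (m + k)) := summable_sE ht k
      have h1 := (summable_nat_add_iff 1).mpr h0
      refine h1.congr fun m => ?_
      rw [Nat.add_right_comm])]


lemma core_coeff_aux (m : ℕ) : ((m + 3 : ℕ) : ℝ) / (m + 3)! + 1 / ((m + 3)! * ((m + 3) + 1)!)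
    ≤ ∑ j ∈ Finset.range ((m + 3) + 1), 1 / ((j ! : ℝ) * ((m + 3 - j)! * (m + 3 - j + 1)!)) := by
  have hA : (0:ℝ) < ((m + 1)! : ℝ) := by exact_mod_cast Nat.factorial_pos (m + 1)
  have e2 : ((m + 2)! : ℝ) = ((m : ℝ) + 2) * ((m + 1)! : ℝ) := by
    rw [show m + 2 = (m + 1) + 1 from rfl, Nat.factorial_succ]
    push_cast; ring
  have e3 : ((m + 3)! : ℝ) = ((m : ℝ) + 3) * ((m : ℝ) + 2) * ((m + 1)! : ℝ) := by
    rw [show m + 3 = (m + 2) + 1 from rfl, Nat.factorial_succ]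
    push_cast
    rw [e2]
    push_cast; ring
  have hsub : ({0, m + 1, m + 2, m + 3} : Finset ℕ) ⊆ Finset.range ((m + 3) + 1) := by
    intro j hj
    simp only [Finset.mem_insert, Finset.mem_singleton] at hj
    rw [Finset.mem_range]
    omega
  have hle : ∑ j ∈ ({0, m + 1, m + 2, m + 3} : Finset ℕ),
        1 / ((j ! : ℝ) * ((m + 3 - j)! * (m + 3 - j + 1)!))
      ≤ ∑ j ∈ Finset.range ((m + 3) + 1), 1 / ((j ! : ℝ) * ((m + 3 - j)! * (m + 3 - j + 1)!)) :=
    Finset.sum_le_sum_of_subset_of_nonneg hsub (fun j _ _ => by positivity)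
  have hsum : ∑ j ∈ ({0, m + 1, m + 2, m + 3} : Finset ℕ),
        1 / ((j ! : ℝ) * ((m + 3 - j)! * (m + 3 - j + 1)!))
      = 1 / (((m + 3)! : ℝ) * ((m + 4)! : ℝ)) + 1 / (((m + 1)! : ℝ) * 12)
        + 1 / (((m + 2)! : ℝ) * 2) + 1 / ((m + 3)! : ℝ) := by
    rw [Finset.sum_insert (by simp only [Finset.mem_insert, Finset.mem_singleton]; omega),
      Finset.sum_insert (by simp only [Finset.mem_insert, Finset.mem_singleton]; omega),
      Finset.sum_insert (by simp only [Finset.mem_singleton]; omega),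
      Finset.sum_singleton]
    rw [show m + 3 - 0 = m + 3 from rfl, show m + 3 - (m + 1) = 2 from by omega,
      show m + 3 - (m + 2) = 1 from by omega, show m + 3 - (m + 3) = 0 from by omega]
    norm_num [Nat.factorial]
    ring
  have hmm : (m : ℝ) ≤ (m : ℝ) ^ 2 := by
    have : m ≤ m ^ 2 := by nlinarith [Nat.zero_le m]
    exact_mod_cast this
  have main : ((m : ℝ) + 3) / ((m + 3)! : ℝ)
      ≤ 1 / ((m + 3)! : ℝ) + 1 / (((m + 2)! : ℝ) * 2) + 1 / (((m + 1)! : ℝ) * 12) := by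
    have h12 : 12 * ((m : ℝ) + 3) ≤ 12 + 6 * ((m : ℝ) + 3) + ((m : ℝ) + 3) * ((m : ℝ) + 2) := by
      nlinarith [hmm]
    have expand : 1 / ((m + 3)! : ℝ) + 1 / (((m + 2)! : ℝ) * 2) + 1 / (((m + 1)! : ℝ) * 12)
        = (12 + 6 * ((m : ℝ) + 3) + ((m : ℝ) + 3) * ((m : ℝ) + 2)) / (12 * ((m + 3)! : ℝ)) := by
      rw [e2, e3]
      field_simp
      ring
    have lhs_eq : ((m : ℝ) + 3) / ((m + 3)! : ℝ)
        = (12 * ((m : ℝ) + 3)) / (12 * ((m + 3)! : ℝ)) := by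
      rw [mul_div_mul_left _ _ (by norm_num : (12:ℝ) ≠ 0)]
    rw [lhs_eq, expand]
    have h0 : (0:ℝ) < 12 * ((m + 3)! : ℝ) := by
      have : (0:ℝ) < ((m + 3)! : ℝ) := by exact_mod_cast Nat.factorial_pos (m + 3)
      linarith
    exact div_le_div_of_nonneg_right h12 h0.le
  have hcast : ((m + 3 : ℕ) : ℝ) = (m : ℝ) + 3 := by push_cast; ring
  have hfin : ((m + 3) + 1) = m + 4 := rfl
  calc ((m + 3 : ℕ) : ℝ) / (m + 3)! + 1 / ((m + 3)! * ((m + 3) + 1)!)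
      = ((m : ℝ) + 3) / ((m + 3)! : ℝ) + 1 / (((m + 3)! : ℝ) * ((m + 4)! : ℝ)) := by
        rw [hcast, hfin]
    _ ≤ 1 / ((m + 3)! : ℝ) + 1 / (((m + 2)! : ℝ) * 2) + 1 / (((m + 1)! : ℝ) * 12)
        + 1 / (((m + 3)! : ℝ) * ((m + 4)! : ℝ)) := by linarith [main]
    _ = 1 / (((m + 3)! : ℝ) * ((m + 4)! : ℝ)) + 1 / (((m + 1)! : ℝ) * 12)
        + 1 / (((m + 2)! : ℝ) * 2) + 1 / ((m + 3)! : ℝ) := by ring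
    _ ≤ ∑ j ∈ Finset.range ((m + 3) + 1), 1 / ((j ! : ℝ) * ((m + 3 - j)! * (m + 3 - j + 1)!)) := by
        rw [← hsum]; exact hle

lemma core_coeff (n : ℕ) : (n : ℝ) / n ! + 1 / (n ! * (n + 1)!)
    ≤ ∑ j ∈ Finset.range (n + 1), 1 / ((j ! : ℝ) * ((n - j)! * (n - j + 1)!)) := by
  rcases n with _ | _ | _ | m
  · norm_num [Nat.factorial]
  · rw [Finset.sum_range_succ, Finset.sum_range_succ, Finset.sum_range_zero]
    norm_num [Nat.factorial]
  · rw [Finset.sum_range_succ, Finset.sum_range_succ, Finset.sum_range_succ,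
      Finset.sum_range_zero]
    norm_num [Nat.factorial]
  · exact core_coeff_aux m

lemma exp_series (x : ℝ) : Real.exp x = ∑' n : ℕ, x ^ n / n ! := by
  rw [Real.exp_eq_exp_ℝ, NormedSpace.exp_eq_tsum_div]

lemma summable_nxn {x : ℝ} (hx : 0 ≤ x) : Summable (fun n : ℕ => (n : ℝ) * x ^ n / n !) := by
  refine Summable.of_nonneg_of_le (fun n => by positivity) (fun n => ?_)
    (Real.summable_pow_div_factorial (2 * x))
  have h2 : (n : ℝ) ≤ 2 ^ n := by exact_mod_cast (Nat.lt_two_pow_self (n := n)).le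
  have hf : (0:ℝ) < (n ! : ℝ) := by exact_mod_cast Nat.factorial_pos n
  calc (n : ℝ) * x ^ n / n ! ≤ 2 ^ n * x ^ n / n ! := by gcongr <;> positivity
    _ = (2 * x) ^ n / n ! := by rw [mul_pow]

lemma xexp_eq {x : ℝ} (hx : 0 ≤ x) : ∑' n : ℕ, (n : ℝ) * x ^ n / n ! = x * Real.exp x := by
  rw [Summable.tsum_eq_zero_add (summable_nxn hx)]
  have h0 : ((0 : ℕ) : ℝ) * x ^ 0 / 0! = 0 := by norm_num
  rw [h0, zero_add]
  have hterm : ∀ n : ℕ, ((n + 1 : ℕ) : ℝ) * x ^ (n + 1) / (n + 1)! = x * (x ^ n / n !) := by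
    intro n
    rw [Nat.factorial_succ]
    have hf : (0:ℝ) < (n ! : ℝ) := by exact_mod_cast Nat.factorial_pos n
    push_cast
    rw [pow_succ]
    field_simp
  rw [tsum_congr hterm, tsum_mul_left, exp_series]

lemma L_ineq {x : ℝ} (hx : 0 ≤ x) : x * Real.exp x + sS x ≤ Real.exp x * sS x := by
  have hf : Summable (fun n : ℕ => ‖x ^ n / (n ! : ℝ)‖) := by
    refine (Real.summable_pow_div_factorial x).congr fun n => ?_
    rw [Real.norm_eq_abs, abs_of_nonneg (by positivity)]
  have hg : Summable (fun n : ℕ => ‖x ^ n / ((n ! : ℝ) * (n + 1)!)‖) := by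
    refine (summable_sS hx).congr fun n => ?_
    rw [Real.norm_eq_abs, abs_of_nonneg (by positivity)]
  have hC := tsum_mul_tsum_eq_tsum_sum_range_of_summable_norm hf hg
  have hL : x * Real.exp x + sS x = ∑' n : ℕ, ((n : ℝ) * x ^ n / n ! + x ^ n / (n ! * (n + 1)!)) := by
    rw [← xexp_eq hx, show sS x = ∑' j : ℕ, x ^ j / (j ! * (j + 1)!) from rfl,
      Summable.tsum_add (summable_nxn hx) (summable_sS hx)]
  rw [hL, exp_series, show sS x = ∑' j : ℕ, x ^ j / (j ! * (j + 1)!) from rfl, hC]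
  apply Summable.tsum_le_tsum _ ((summable_nxn hx).add (summable_sS hx))
    ((summable_norm_sum_mul_range_of_summable_norm hf hg).of_norm)
  intro n
  have hterm : ∀ k ∈ Finset.range (n + 1),
      (x ^ k / (k ! : ℝ)) * (x ^ (n - k) / (((n - k)! : ℝ) * ((n - k) + 1)!))
        = x ^ n * (1 / ((k ! : ℝ) * ((n - k)! * (n - k + 1)!))) := by
    intro k hk
    rw [Finset.mem_range] at hk
    have hkn : k ≤ n := by omega
    have hpow : x ^ k * x ^ (n - k) = x ^ n := by
      rw [← pow_add, Nat.add_sub_cancel' hkn]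
    have h1 : (0:ℝ) < (k ! : ℝ) := by exact_mod_cast Nat.factorial_pos k
    have h2 : (0:ℝ) < ((n - k)! : ℝ) := by exact_mod_cast Nat.factorial_pos (n - k)
    have h3 : (0:ℝ) < ((n - k + 1)! : ℝ) := by exact_mod_cast Nat.factorial_pos (n - k + 1)
    rw [div_mul_div_comm, hpow, mul_one_div]
  rw [Finset.sum_congr rfl hterm, ← Finset.mul_sum]
  have hcc := core_coeff n
  calc (n : ℝ) * x ^ n / n ! + x ^ n / (n ! * (n + 1)!)
      = x ^ n * ((n : ℝ) / n ! + 1 / (n ! * (n + 1)!)) := by ring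
    _ ≤ x ^ n * ∑ j ∈ Finset.range (n + 1), 1 / ((j ! : ℝ) * ((n - j)! * (n - j + 1)!)) :=
        mul_le_mul_of_nonneg_left hcc (pow_nonneg hx n)

lemma core_pointwise {x : ℝ} (hx : 0 < x) : x ≤ (1 - Real.exp (-x)) * sS x := by
  have L := L_ineq hx.le
  have he : Real.exp (-x) * Real.exp x = 1 := by rw [← Real.exp_add]; simp
  have h1 : Real.exp (-x) * (x * Real.exp x + sS x) ≤ Real.exp (-x) * (Real.exp x * sS x) :=
    mul_le_mul_of_nonneg_left L (Real.exp_pos (-x)).le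
  have h2 : Real.exp (-x) * (x * Real.exp x + sS x) = x + Real.exp (-x) * sS x := by
    calc Real.exp (-x) * (x * Real.exp x + sS x)
        = x * (Real.exp (-x) * Real.exp x) + Real.exp (-x) * sS x := by ring
      _ = x + Real.exp (-x) * sS x := by rw [he]; ring
  have h3 : Real.exp (-x) * (Real.exp x * sS x) = sS x := by
    rw [← mul_assoc, he, one_mul]
  rw [h2, h3] at h1
  linarith

lemma key_ineq' (k : ℕ) {t : ℝ} (ht : 0 < t) : ((k + 1)! : ℝ) * sP k t ≤ sE k t := by
  have hmono : (∫⁻ x in Set.Ioi (0:ℝ),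
      ENNReal.ofReal (x ^ (k + 1) * Real.exp (-(t * x)) / (1 - Real.exp (-x))))
      ≤ ∫⁻ x in Set.Ioi (0:ℝ), ENNReal.ofReal (x ^ k * sS x * Real.exp (-(t * x))) := by
    apply lintegral_mono_ae
    rw [ae_restrict_iff' measurableSet_Ioi]
    apply ae_of_all
    intro x hx
    rw [Set.mem_Ioi] at hx
    apply ENNReal.ofReal_le_ofReal
    have hex : 0 < 1 - Real.exp (-x) := by
      have : Real.exp (-x) < 1 := by rw [Real.exp_lt_one_iff]; linarith
      linarith
    have hcore := core_pointwise hx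
    have hdiv : x / (1 - Real.exp (-x)) ≤ sS x := by
      rw [div_le_iff₀ hex]
      linarith [hcore]
    calc x ^ (k + 1) * Real.exp (-(t * x)) / (1 - Real.exp (-x))
        = (x / (1 - Real.exp (-x))) * (x ^ k * Real.exp (-(t * x))) := by
          rw [pow_succ]
          field_simp
      _ ≤ sS x * (x ^ k * Real.exp (-(t * x))) := by
          apply mul_le_mul_of_nonneg_right hdiv
          positivity
      _ = x ^ k * sS x * Real.exp (-(t * x)) := by ring
  rw [← P_side k ht, E_side k ht] at hmono
  have htail : (((k + 1)! : ℝ) * sP k t) ≤ ∑' m : ℕ, sa k (m + 1) / t ^ (m + k + 1) := by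
    rw [← ENNReal.ofReal_le_ofReal_iff]
    · exact hmono
    · exact tsum_nonneg fun m => div_nonneg (sa_nonneg _ _) (by positivity)
  have hE : sE k t = sa k 0 / t ^ (0 + k) + ∑' m : ℕ, sa k (m + 1) / t ^ (m + 1 + k) := by
    rw [show sE k t = ∑' m : ℕ, sa k m / t ^ (m + k) from rfl]
    exact Summable.tsum_eq_zero_add (summable_sE ht k)
  have hswap : (∑' m : ℕ, sa k (m + 1) / t ^ (m + 1 + k)) = ∑' m : ℕ, sa k (m + 1) / t ^ (m + k + 1) := by
    congr 1; ext m; rw [Nat.add_right_comm]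
  have h0 : 0 ≤ sa k 0 / t ^ (0 + k) := div_nonneg (sa_nonneg _ _) (by positivity)
  calc ((k + 1)! : ℝ) * sP k t ≤ ∑' m : ℕ, sa k (m + 1) / t ^ (m + k + 1) := htail
    _ = ∑' m : ℕ, sa k (m + 1) / t ^ (m + 1 + k) := hswap.symm
    _ ≤ sE k t := by rw [hE]; linarith

lemma key_ineq (k : ℕ) {t : ℝ} (ht : 0 < t) : ((k + 1)! : ℝ) * sP k t ≤ sE k t :=
  key_ineq' k ht

lemma iter_formula (k : ℕ) : ∀ t : ℝ, 0 < t →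
    iteratedDeriv k (fun t : ℝ => Real.exp (1 / t) - ∑' n : ℕ, 1 / (t + n) ^ 2) t
      = (-1) ^ k * (sE k t - ((k + 1)! : ℝ) * sP k t) := by
  induction k with
  | zero =>
    intro t ht
    rw [iteratedDeriv_zero]
    rw [sE_zero ht, show sP 0 t = ∑' n : ℕ, 1 / (t + n) ^ 2 from rfl]
    norm_num
  | succ k ih =>
    intro t ht
    rw [iteratedDeriv_succ]
    have hev : iteratedDeriv k (fun t : ℝ => Real.exp (1 / t) - ∑' n : ℕ, 1 / (t + n) ^ 2)
        =ᶠ[𝓝 t] fun y => (-1) ^ k * (sE k y - ((k + 1)! : ℝ) * sP k y) :=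
      eventually_of_mem (Ioi_mem_nhds ht) (fun y hy => ih y hy)
    rw [hev.deriv_eq]
    have hd : HasDerivAt (fun y => (-1 : ℝ) ^ k * (sE k y - ((k + 1)! : ℝ) * sP k y))
        ((-1 : ℝ) ^ k * (-(sE (k + 1) t) - ((k + 1)! : ℝ) * (-((k : ℝ) + 2) * sP (k + 1) t))) t :=
      (((hasDerivAt_sE k ht).sub ((hasDerivAt_sP k ht).const_mul ((k + 1)! : ℝ))).const_mul _)
    rw [hd.deriv]
    have hfac : (((k + 1) + 1)! : ℝ) = ((k + 1)! : ℝ) * ((k : ℝ) + 2) := by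
      rw [Nat.factorial_succ]
      push_cast
      ring
    rw [hfac]
    ring


lemma analytic_sum_part : AnalyticOnNhd ℝ (fun t : ℝ => ∑' n : ℕ, 1 / (t + n) ^ 2) (Set.Ioi 0) := by
  intro x hx
  rw [Set.mem_Ioi] at hx
  have ha0 : 0 < x / 2 := by linarith
  set U : Set ℂ := {z : ℂ | x / 2 < z.re} with hUdef
  have hUopen : IsOpen U := isOpen_lt continuous_const Complex.continuous_re
  have hre : ∀ (n : ℕ) (z : ℂ), z ∈ U → x / 2 + n ≤ (z + n).re := by
    intro n z hz
    have : x / 2 < z.re := hz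
    rw [Complex.add_re]
    simp only [Complex.natCast_re]
    linarith
  have hne : ∀ (n : ℕ) (z : ℂ), z ∈ U → z + n ≠ 0 := by
    intro n z hz h0
    have h1 := hre n z hz
    rw [h0] at h1
    simp only [Complex.zero_re] at h1
    have : (0:ℝ) ≤ n := Nat.cast_nonneg n
    linarith
  have hnorm : ∀ (n : ℕ) (z : ℂ), z ∈ U → ‖1 / (z + n) ^ 2‖ ≤ 1 / (x / 2 + n) ^ 2 := by
    intro n z hz
    have h1 := hre n z hz
    have h2 : (0:ℝ) < x / 2 + n := by have : (0:ℝ) ≤ n := Nat.cast_nonneg n; linarith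
    rw [norm_div, norm_one, norm_pow]
    have h3 : x / 2 + n ≤ ‖z + n‖ := le_trans h1 (Complex.re_le_norm _)
    gcongr
  have hdiff : DifferentiableOn ℂ (fun z : ℂ => ∑' n : ℕ, 1 / (z + n) ^ 2) U := by
    apply Complex.differentiableOn_tsum_of_summable_norm (summable_sP ha0 0) _ hUopen hnorm
    intro i
    apply DifferentiableOn.div (differentiableOn_const 1)
    · exact ((differentiable_id.add_const _).pow 2).differentiableOn
    · intro z hz
      exact pow_ne_zero 2 (hne i z hz)
  have hanF : AnalyticOnNhd ℂ (fun z : ℂ => ∑' n : ℕ, 1 / (z + n) ^ 2) U :=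
    hdiff.analyticOnNhd hUopen
  have hxU : (x : ℂ) ∈ U := by
    show x / 2 < (x : ℂ).re
    rw [Complex.ofReal_re]
    linarith
  have h1 : AnalyticAt ℝ (fun t : ℝ => ((t : ℂ))) x := Complex.ofRealCLM.analyticAt x
  have h2 : AnalyticAt ℝ (fun z : ℂ => ∑' n : ℕ, 1 / (z + n) ^ 2) (x : ℂ) :=
    (hanF _ hxU).restrictScalars
  have h23 : AnalyticAt ℝ ((fun z : ℂ => ∑' n : ℕ, 1 / (z + n) ^ 2) ∘ Complex.ofReal) x :=
    h2.comp h1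
  have h4' : AnalyticAt ℝ ((fun z : ℂ => z.re) ∘
      ((fun z : ℂ => ∑' n : ℕ, 1 / (z + n) ^ 2) ∘ Complex.ofReal)) x := by
    apply AnalyticAt.comp _ h23
    exact Complex.reCLM.analyticAt _
  have h4 : AnalyticAt ℝ (fun t : ℝ => (∑' n : ℕ, 1 / ((t : ℂ) + n) ^ 2).re) x := by
    exact h4'
  apply h4.congr
  apply eventually_of_mem (Ioi_mem_nhds hx)
  intro t ht
  have hcast : ((∑' n : ℕ, 1 / (t + n) ^ 2 : ℝ) : ℂ) = ∑' n : ℕ, 1 / ((t : ℂ) + n) ^ 2 := by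
    rw [Complex.ofReal_tsum]
    congr 1
    ext n
    push_cast
    ring
  simp only []
  rw [← hcast, Complex.ofReal_re]

lemma analytic_part :
    ContDiffOn ℝ (⊤ : ℕ∞) (fun t : ℝ => Real.exp (1 / t) - ∑' n : ℕ, 1 / (t + n) ^ 2) (Set.Ioi 0) := by
  have h1 : AnalyticOnNhd ℝ (fun t : ℝ => Real.exp (1 / t)) (Set.Ioi 0) := by
    intro x hx
    rw [Set.mem_Ioi] at hx
    have : AnalyticAt ℝ (fun t : ℝ => 1 / t) x :=
      (analyticAt_const).div (analyticAt_id) hx.ne'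
    exact analyticAt_rexp.comp this
  exact ((h1.sub analytic_sum_part).contDiffOn (uniqueDiffOn_Ioi 0))

theorem stmt_9 :
    ContDiffOn ℝ (⊤ : ℕ∞) (fun t : ℝ => Real.exp (1 / t) - ∑' n : ℕ, 1 / (t + n) ^ 2) (Set.Ioi 0)
    ∧ ∀ (k : ℕ) (t : ℝ), 0 < t →
        0 ≤ (-1) ^ k *
          iteratedDeriv k (fun t : ℝ => Real.exp (1 / t) - ∑' n : ℕ, 1 / (t + n) ^ 2) t := by
  constructor
  · exact analytic_part
  · intro k t ht
    rw [iter_formula k t ht]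
    have h1 : ((-1 : ℝ)) ^ k * (-1) ^ k = 1 := by
      rw [← pow_add]
      exact Even.neg_one_pow ⟨k, rfl⟩
    rw [← mul_assoc, h1, one_mul]
    have := key_ineq k ht
    linarith
end

section
/- For every real t > 0, e^{1/t} - ψ'(t) = 1 + ∫_0^∞ [g(u) - u/(1 - e^{-u})] e^{-tu} du, where g(u) = ∑_{k=0}^∞ u^k/(k!(k+1)!). -/
/-!
For `u > 0` the geometric series gives `u / (1 - e^{-u}) = ∑ₙ u e^{-nu}`, so the integrand is
`∑ₖ (u^k / (k! (k+1)!) e^{-tu} - u e^{-(t+k)u})`. By `∫₀^∞ u^k e^{-cu} du = k! / c^{k+1}` the two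
halves of the `k`-th term integrate to `t^{-(k+1)} / (k+1)!` and `1 / (t+k)^2`, whose sums are
`e^{1/t} - 1` and `ψ'(t)`. Termwise integration is legitimate since both halves are nonnegative
with summable integrals.
-/

open MeasureTheory Set Real
open scoped Nat

theorem integral_pow_mul_exp_neg_mul_Ioi (k : ℕ) {c : ℝ} (hc : 0 < c) :
    ∫ u in Ioi (0 : ℝ), u ^ k * exp (-c * u) = k ! / c ^ (k + 1) := by
  have h := integral_rpow_mul_exp_neg_mul_Ioi (a := k + 1) (by positivity) hc
  rw [add_sub_cancel_right, Gamma_nat_eq_factorial, ← Nat.cast_succ] at h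
  simp only [rpow_natCast] at h
  simp only [neg_mul, h, one_div_pow, one_div_mul_eq_div]

theorem integrableOn_pow_mul_exp_neg_mul_Ioi (k : ℕ) {c : ℝ} (hc : 0 < c) :
    IntegrableOn (fun u : ℝ ↦ u ^ k * exp (-c * u)) (Ioi 0) := by
  simpa only [rpow_natCast, rpow_one] using
    integrableOn_rpow_mul_exp_neg_mul_rpow (s := k) (p := 1) (by linarith [k.cast_nonneg (α := ℝ)])
      one_pos hc

theorem hasSum_pow_succ_div_factorial_succ (x : ℝ) :
    HasSum (fun k : ℕ ↦ x ^ (k + 1) / (k + 1)!) (exp x - 1) := by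
  have h := NormedSpace.expSeries_div_hasSum_exp x
  rw [← exp_eq_exp_ℝ, ← hasSum_nat_add_iff' 1] at h
  simpa using h

theorem summable_pow_div_factorial_mul_factorial_succ (x : ℝ) :
    Summable fun k : ℕ ↦ x ^ k / (k ! * (k + 1)!) := by
  refine Summable.of_norm_bounded (Real.summable_pow_div_factorial |x|) fun k ↦ ?_
  rw [norm_div, norm_pow, norm_mul, Real.norm_eq_abs, Real.norm_natCast, Real.norm_natCast]
  gcongr
  exact le_mul_of_one_le_right (by positivity) (mod_cast (k + 1).factorial_pos)

theorem hasSum_mul_exp_neg_nat_mul {u : ℝ} (hu : 0 < u) :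
    HasSum (fun n : ℕ ↦ u * exp (-(n * u))) (u / (1 - exp (-u))) := by
  have h := (hasSum_geometric_of_lt_one (exp_nonneg (-u))
    (exp_lt_one_iff.2 (neg_neg_of_pos hu))).mul_left u
  simpa only [← exp_nat_mul, mul_neg, div_eq_mul_inv] using h

theorem summable_one_div_add_nat_sq {t : ℝ} (ht : 0 < t) :
    Summable fun n : ℕ ↦ 1 / (t + n) ^ 2 := by
  refine ((Real.summable_one_div_nat_add_rpow t 2).2 one_lt_two).congr fun n ↦ ?_
  rw [abs_of_pos (by positivity), rpow_two, add_comm]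

theorem integral_tsum_sub_of_nonneg {α : Type*} [MeasurableSpace α] {μ : Measure α}
    {ι : Type*} [Countable ι] {F H : ι → α → ℝ} {A B : ℝ}
    (hF_nonneg : ∀ i, 0 ≤ᵐ[μ] F i) (hH_nonneg : ∀ i, 0 ≤ᵐ[μ] H i)
    (hF : ∀ i, Integrable (F i) μ) (hH : ∀ i, Integrable (H i) μ)
    (hA : HasSum (fun i ↦ ∫ a, F i a ∂μ) A) (hB : HasSum (fun i ↦ ∫ a, H i a ∂μ) B) :
    ∫ a, ∑' i, (F i a - H i a) ∂μ = A - B := by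
  have integral_norm_eq {G : α → ℝ} (hG : 0 ≤ᵐ[μ] G) : ∫ a, ‖G a‖ ∂μ = ∫ a, G a ∂μ :=
    integral_congr_ae (hG.mono fun a ha ↦ norm_of_nonneg ha)
  have hsum : Summable fun i ↦ ∫ a, ‖F i a - H i a‖ ∂μ := by
    refine Summable.of_nonneg_of_le (fun i ↦ integral_nonneg fun a ↦ norm_nonneg _)
      (fun i ↦ ?_) (hA.summable.add hB.summable)
    calc ∫ a, ‖F i a - H i a‖ ∂μ ≤ ∫ a, (‖F i a‖ + ‖H i a‖) ∂μ :=
          integral_mono ((hF i).sub (hH i)).norm ((hF i).norm.add (hH i).norm)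
            fun a ↦ norm_sub_le _ _
      _ = ∫ a, F i a ∂μ + ∫ a, H i a ∂μ := by
          rw [integral_add (hF i).norm (hH i).norm, integral_norm_eq (hF_nonneg i),
            integral_norm_eq (hH_nonneg i)]
  refine (hasSum_integral_of_summable_integral_norm (fun i ↦ (hF i).sub (hH i)) hsum).unique ?_
  simpa only [Pi.sub_apply, integral_sub (hF _) (hH _)] using hA.sub hB

theorem integrableOn_pow_div_factorial_mul_factorial_succ_mul_exp_neg_mul (k : ℕ) {t : ℝ}
    (ht : 0 < t) :
    IntegrableOn (fun u : ℝ ↦ u ^ k / (k ! * (k + 1)!) * exp (-t * u)) (Ioi 0) := by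
  have h := (integrableOn_pow_mul_exp_neg_mul_Ioi k ht).div_const ((k ! : ℝ) * (k + 1)!)
  simp only [mul_div_right_comm] at h
  exact h

theorem integrableOn_mul_exp_neg_mul_Ioi {c : ℝ} (hc : 0 < c) :
    IntegrableOn (fun u : ℝ ↦ u * exp (-c * u)) (Ioi 0) := by
  simpa only [pow_one] using integrableOn_pow_mul_exp_neg_mul_Ioi 1 hc

theorem hasSum_integral_pow_div_factorial_mul_factorial_succ_mul_exp_neg_mul {t : ℝ} (ht : 0 < t) :
    HasSum (fun k : ℕ ↦ ∫ u in Ioi (0 : ℝ), u ^ k / (k ! * (k + 1)!) * exp (-t * u))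
      (exp t⁻¹ - 1) := by
  refine (hasSum_pow_succ_div_factorial_succ t⁻¹).congr_fun fun k ↦ ?_
  simp_rw [div_mul_eq_mul_div]
  rw [integral_div, integral_pow_mul_exp_neg_mul_Ioi k ht, inv_pow]
  field_simp

theorem hasSum_integral_mul_exp_neg_add_nat_mul {t : ℝ} (ht : 0 < t) :
    HasSum (fun n : ℕ ↦ ∫ u in Ioi (0 : ℝ), u * exp (-(t + n) * u))
      (∑' n : ℕ, 1 / (t + n) ^ 2) := by
  refine (summable_one_div_add_nat_sq ht).hasSum.congr_fun fun n ↦ ?_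
  simpa only [pow_one, Nat.factorial_one, Nat.cast_one, one_add_one_eq_two] using
    integral_pow_mul_exp_neg_mul_Ioi 1 (by positivity : 0 < t + n)

theorem sub_mul_exp_neg_mul_eq_tsum {u : ℝ} (hu : 0 < u) (t : ℝ) :
    ((∑' k : ℕ, u ^ k / (k ! * (k + 1)!)) - u / (1 - exp (-u))) * exp (-t * u)
      = ∑' k : ℕ, (u ^ k / (k ! * (k + 1)!) * exp (-t * u) - u * exp (-(t + k) * u)) := by
  have hg := (summable_pow_div_factorial_mul_factorial_succ u).hasSum.mul_right (exp (-t * u))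
  have hK := (hasSum_mul_exp_neg_nat_mul hu).mul_right (exp (-t * u))
  rw [sub_mul, ← (hg.sub hK).tsum_eq]
  congr! 2 with k
  rw [mul_assoc, ← exp_add]
  ring_nf

theorem stmt_10 : ∀ t : ℝ, 0 < t →
    Real.exp (1 / t) - (∑' n : ℕ, 1 / (t + n) ^ 2)
      = 1 + ∫ u in Set.Ioi (0 : ℝ),
          ((∑' k : ℕ, u ^ k / ((k.factorial : ℝ) * ((k + 1).factorial : ℝ)))
            - u / (1 - Real.exp (-u))) * Real.exp (-t * u) := by
  intro t ht
  have hpos : ∀ᵐ u ∂(volume.restrict (Ioi (0 : ℝ))), 0 < u := ae_restrict_mem measurableSet_Ioi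
  rw [setIntegral_congr_fun measurableSet_Ioi fun u hu ↦ sub_mul_exp_neg_mul_eq_tsum hu t,
    integral_tsum_sub_of_nonneg
      (fun k ↦ hpos.mono fun u hu ↦ by positivity) (fun n ↦ hpos.mono fun u hu ↦ by positivity)
      (fun k ↦ integrableOn_pow_div_factorial_mul_factorial_succ_mul_exp_neg_mul k ht)
      (fun n ↦ integrableOn_mul_exp_neg_mul_Ioi (by positivity))
      (hasSum_integral_pow_div_factorial_mul_factorial_succ_mul_exp_neg_mul ht)
      (hasSum_integral_mul_exp_neg_add_nat_mul ht), one_div]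
  ring
end
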